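/- Cauchy–Bolzano criterion (necessity): Let X be a Dedekind complete weakly σ-distributive Riesz space and T a time scale. If f : [a,b]_T → X is HK Δ-integrable on [a,b]_T, then there exists a (D)-sequence (c_{i,j}) in X such that for every φ : ℕ → ℕ there exists a Δ-gauge δ for [a,b]_T with |S(f,D₁) − S(f,D₂)| < ⋁_i c_{i,φ(i)} for all δ-fine HK partitions D₁, D₂ of [a,b]_T. -/

import Mathlib

open Finset

/-- A `(D)`-sequence (regulator) in a Dedekind complete Riesz space:
a bounded double sequence whose rows are decreasing with infimum `0`. -/
def IsDSeq {X : Type*} [ConditionallyCompleteLattice X] [AddCommGroup X]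
    (A : ℕ → ℕ → X) : Prop :=
  BddAbove (Set.range fun p : ℕ × ℕ => A p.1 p.2) ∧
  BddBelow (Set.range fun p : ℕ × ℕ => A p.1 p.2) ∧
  (∀ i, Antitone (A i)) ∧ (∀ i, (⨅ j, A i j) = 0)

/-- Weak σ-distributivity of a Dedekind complete Riesz space. -/
def WeaklySigmaDistributive (X : Type*) [ConditionallyCompleteLattice X]
    [AddCommGroup X] : Prop :=
  ∀ A : ℕ → ℕ → X, IsDSeq A → (⨅ φ : ℕ → ℕ, ⨆ i, A i (φ i)) = 0

/-- Forward jump operator of a time scale `T`. -/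
noncomputable def tsSigma (T : Set ℝ) (t : ℝ) : ℝ := sInf {s | s ∈ T ∧ t < s}

/-- A Δ-gauge on the time-scale interval `[a,b]_T`. -/
structure DeltaGauge (T : Set ℝ) (a b : ℝ) where
  dL : ℝ → ℝ
  dR : ℝ → ℝ
  hL : ∀ ξ ∈ T ∩ Set.Ioc a b, 0 < dL ξ
  hR : ∀ ξ ∈ T ∩ Set.Ico a b, 0 < dR ξ
  hLa : 0 ≤ dL a
  hRb : 0 ≤ dR b
  hmu : ∀ ξ ∈ T ∩ Set.Ico a b, tsSigma T ξ - ξ ≤ dR ξ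

/-- A tagged partition of the time-scale interval `[a,b]_T`. -/
structure TSPartition (T : Set ℝ) (a b : ℝ) where
  n : ℕ
  t : ℕ → ℝ
  tag : ℕ → ℝ
  hn : 0 < n
  h0 : t 0 = a
  hb : t n = b
  hmono : ∀ k < n, t k < t (k + 1)
  htT : ∀ k ≤ n, t k ∈ T
  htag : ∀ k < n, tag k ∈ T ∩ Set.Icc (t k) (t (k + 1))

/-- `δ`-fineness of a tagged partition. -/
def TSPartition.IsFine {T : Set ℝ} {a b : ℝ} (P : TSPartition T a b)
    (δ : DeltaGauge T a b) : Prop :=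
  ∀ k < P.n, T ∩ Set.Icc (P.t k) (P.t (k + 1)) ⊆
    Set.Ioo (P.tag k - δ.dL (P.tag k)) (P.tag k + δ.dR (P.tag k))

/-- Riemann sum of `f` over the tagged partition `P`. -/
def RS {X : Type*} [AddCommGroup X] [Module ℝ X] {T : Set ℝ} {a b : ℝ}
    (f : ℝ → X) (P : TSPartition T a b) : X :=
  ∑ k ∈ Finset.range P.n, (P.t (k + 1) - P.t k) • f (P.tag k)

/-- `x` is the Henstock–Kurzweil Δ-integral of `f` on `[a,b]_T`. -/
def HKIntegral {X : Type*} [ConditionallyCompleteLattice X] [AddCommGroup X]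
    [Module ℝ X] (T : Set ℝ) (a b : ℝ) (f : ℝ → X) (x : X) : Prop :=
  ∃ A : ℕ → ℕ → X, IsDSeq A ∧ ∀ φ : ℕ → ℕ, ∃ δ : DeltaGauge T a b,
    ∀ P : TSPartition T a b, P.IsFine δ → |RS f P - x| < ⨆ i, A i (φ i)

/-! Two Riemann sums that are each within `⨆ i, A i (φ i)` of the integral are within twice
that of each other. The doubled regulator `2 • A` is again a (D)-sequence, and its diagonal
suprema are the doubled ones because `y ↦ 2 • y` is an order automorphism of `X`. -/

open scoped Pointwise

namespace IsDSeq

variable {X : Type*} [ConditionallyCompleteLattice X] [AddCommGroup X] {A : ℕ → ℕ → X}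

theorem bddAbove_range_apply (hA : IsDSeq A) (φ : ℕ → ℕ) :
    BddAbove (Set.range fun i => A i (φ i)) :=
  hA.1.mono <| Set.range_subset_iff.2 fun i => Set.mem_range_self (i, φ i)

theorem bddBelow_range (hA : IsDSeq A) (i : ℕ) : BddBelow (Set.range (A i)) :=
  hA.2.1.mono <| Set.range_subset_iff.2 fun j => Set.mem_range_self (i, j)

variable [Module ℝ X] [PosSMulMono ℝ X]

theorem const_smul (hA : IsDSeq A) {c : ℝ} (hc : 0 < c) : IsDSeq fun i j => c • A i j := by
  refine ⟨?_, ?_, fun i _ _ hjk => smul_le_smul_of_nonneg_left (hA.2.2.1 i hjk) hc.le,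
    fun i => ?_⟩
  · simpa only [Set.range_smul] using hA.1.smul_of_nonneg hc.le
  · simpa only [Set.range_smul] using hA.2.1.smul_of_nonneg hc.le
  · calc ⨅ j, c • A i j = OrderIso.smulRight hc (⨅ j, A i j) :=
          ((OrderIso.smulRight hc).map_ciInf (hA.bddBelow_range i)).symm
      _ = 0 := by rw [hA.2.2.2 i]; exact smul_zero c

theorem ciSup_const_smul (hA : IsDSeq A) {c : ℝ} (hc : 0 < c) (φ : ℕ → ℕ) :
    ⨆ i, c • A i (φ i) = c • ⨆ i, A i (φ i) :=
  ((OrderIso.smulRight hc).map_ciSup (hA.bddAbove_range_apply φ)).symm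

end IsDSeq

theorem abs_sub_lt_add_of_abs_sub_lt {G : Type*} [Lattice G] [AddCommGroup G]
    [CovariantClass G G (· + ·) (· ≤ ·)] {y z x s t : G}
    (hy : |y - x| < s) (hz : |z - x| < t) : |y - z| < s + t :=
  calc |y - z| = |(y - x) + -(z - x)| := by abel_nf
    _ ≤ |y - x| + |z - x| := (abs_add_le _ _).trans_eq (by rw [abs_neg])
    _ < s + t := add_lt_add hy hz

theorem hk_cauchy_necessity_general {X : Type*} [ConditionallyCompleteLattice X] [AddCommGroup X]
    [CovariantClass X X (· + ·) (· ≤ ·)] [Module ℝ X] [PosSMulMono ℝ X]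
    (T : Set ℝ) (a b : ℝ)
    (f : ℝ → X) (x : X) (hf : HKIntegral T a b f x) :
    ∃ C : ℕ → ℕ → X, IsDSeq C ∧ ∀ φ : ℕ → ℕ, ∃ δ : DeltaGauge T a b,
      ∀ P₁ P₂ : TSPartition T a b, P₁.IsFine δ → P₂.IsFine δ →
        |RS f P₁ - RS f P₂| < ⨆ i, C i (φ i) := by
  obtain ⟨A, hA, hconv⟩ := hf
  refine ⟨fun i j => (2 : ℝ) • A i j, hA.const_smul two_pos, fun φ => ?_⟩
  obtain ⟨δ, hδ⟩ := hconv φ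
  refine ⟨δ, fun P₁ P₂ h₁ h₂ => ?_⟩
  rw [hA.ciSup_const_smul two_pos, two_smul]
  exact abs_sub_lt_add_of_abs_sub_lt (hδ P₁ h₁) (hδ P₂ h₂)

theorem hk_cauchy_necessity {X : Type*} [ConditionallyCompleteLattice X] [AddCommGroup X]
    [CovariantClass X X (· + ·) (· ≤ ·)] [Module ℝ X] [PosSMulMono ℝ X]
    (hwsd : WeaklySigmaDistributive X)
    (T : Set ℝ) (hT : IsClosed T) (a b : ℝ) (ha : a ∈ T) (hb : b ∈ T) (hab : a < b)
    (f : ℝ → X) (x : X) (hf : HKIntegral T a b f x) :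
    ∃ C : ℕ → ℕ → X, IsDSeq C ∧ ∀ φ : ℕ → ℕ, ∃ δ : DeltaGauge T a b,
      ∀ P₁ P₂ : TSPartition T a b, P₁.IsFine δ → P₂.IsFine δ →
        |RS f P₁ - RS f P₂| < ⨆ i, C i (φ i) :=
  hk_cauchy_necessity_general T a b f x hf
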